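/- Let (E₁, E₂, Φ) be a τ-stable triple with r₁ ≠ r₂. Then τ < μ(E₁) + (r₂/|r₁−r₂|)·(μ(E₁) − μ(E₂)). Equivalently, the corresponding σ satisfies σ < (1 + (r₁+r₂)/|r₁−r₂|)·(μ(E₁) − μ(E₂)). -/

import Mathlib

open CategoryTheory CategoryTheory.Limits

noncomputable section

/-- Slope `d/r` of a bundle of degree `d` and rank `r`. -/
def bslope (d : ℤ) (r : ℕ) : ℝ := (d : ℝ) / (r : ℝ)

/-- The quantity `θ_τ(T')` for a subtriple with ranks `r1', r2'` and degrees `d1', d2'`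
of a triple with ranks `r1, r2` and degrees `d1, d2`. -/
def thetaTau (τ : ℝ) (r1 r2 : ℕ) (d1 d2 : ℤ) (r1' r2' : ℕ) (d1' d2' : ℤ) : ℝ :=
  (bslope (d1' + d2') (r1' + r2') - τ) -
    ((r2' : ℝ) / (r2 : ℝ)) * (((r1 : ℝ) + (r2 : ℝ)) / ((r1' : ℝ) + (r2' : ℝ))) *
      (bslope (d1 + d2) (r1 + r2) - τ)

universe v u

variable {C : Type u} [Category.{v} C] [Abelian C]

/-- `(E1', E2')` is a subtriple of `(E1, E2, Φ)` : `Φ` maps `E2'` into `E1'`. -/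
def IsSubtriple {E1 E2 : C} (Φ : E2 ⟶ E1) (E1' : Subobject E1) (E2' : Subobject E2) : Prop :=
  E1'.Factors (E2'.arrow ≫ Φ)

/-- `θ_τ` of a subtriple, expressed through rank and degree functions. -/
def theta (rank : C → ℕ) (deg : C → ℤ) (E1 E2 : C) (τ : ℝ)
    (E1' : Subobject E1) (E2' : Subobject E2) : ℝ :=
  thetaTau τ (rank E1) (rank E2) (deg E1) (deg E2)
    (rank (E1' : C)) (rank (E2' : C)) (deg (E1' : C)) (deg (E2' : C))

/-- τ-stability of the holomorphic triple `(E1, E2, Φ)`. -/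
def TStable (rank : C → ℕ) (deg : C → ℤ) (E1 E2 : C) (Φ : E2 ⟶ E1) (τ : ℝ) : Prop :=
  ∀ (E1' : Subobject E1) (E2' : Subobject E2), IsSubtriple Φ E1' E2' →
    ¬(E1' = ⊥ ∧ E2' = ⊥) → ¬(E1' = ⊤ ∧ E2' = ⊤) →
    theta rank deg E1 E2 τ E1' E2' < 0

/-- τ-semistability of the holomorphic triple `(E1, E2, Φ)`. -/
def TSemistable (rank : C → ℕ) (deg : C → ℤ) (E1 E2 : C) (Φ : E2 ⟶ E1) (τ : ℝ) : Prop :=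
  ∀ (E1' : Subobject E1) (E2' : Subobject E2), IsSubtriple Φ E1' E2' →
    ¬(E1' = ⊥ ∧ E2' = ⊥) → ¬(E1' = ⊤ ∧ E2' = ⊤) →
    theta rank deg E1 E2 τ E1' E2' ≤ 0

/-- Slope stability for a single bundle. -/
def BStable (rank : C → ℕ) (deg : C → ℤ) (B : C) : Prop :=
  ∀ X : Subobject B, X ≠ ⊥ → X ≠ ⊤ →
    bslope (deg (X : C)) (rank (X : C)) < bslope (deg B) (rank B)

/-- Slope semistability for a single bundle. -/
def BSemistable (rank : C → ℕ) (deg : C → ℤ) (B : C) : Prop :=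
  ∀ X : Subobject B, X ≠ ⊥ →
    bslope (deg (X : C)) (rank (X : C)) ≤ bslope (deg B) (rank B)

/-! After clearing denominators, stability of the subtriple `(⊤, ⊥)` says `x := d₁ - r₁τ < 0`,
and stability of `(⊥, Ker Φ)` and `(Im Φ, ⊤)`, added up through `Ker Φ` and `Im Φ` splitting
rank and degree of `E₂`, says `r₂ (y - x) < k (x + y)` with `y := d₂ - r₂τ` and `k := rk Ker Φ`;
it is strict because `r₁ ≠ r₂` makes one of the two subtriples proper. Since `0 ≤ k ≤ r₂` this
forces `y < 0`, so `x + y < 0`, and then `max 0 (r₂ - r₁) ≤ k` turns it into the bound on `τ`. -/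

theorem thetaTau_neg_iff {τ : ℝ} {r1 r2 r1' r2' : ℕ} {d1 d2 d1' d2' : ℤ} (h2 : 0 < r2)
    (hr' : 0 < r1' + r2') :
    thetaTau τ r1 r2 d1 d2 r1' r2' d1' d2' < 0 ↔
      (r2 : ℝ) * (d1' + d2' - (r1' + r2') * τ) < r2' * (d1 + d2 - (r1 + r2) * τ) := by
  have h2' : (0 : ℝ) < r2 := by exact_mod_cast h2
  have hr'' : (0 : ℝ) < r1' + r2' := by exact_mod_cast hr'
  have hr : (0 : ℝ) < r1 + r2 := by positivity
  have hcleared : thetaTau τ r1 r2 d1 d2 r1' r2' d1' d2' =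
      ((r2 : ℝ) * (d1' + d2' - (r1' + r2') * τ) - r2' * (d1 + d2 - (r1 + r2) * τ)) /
        (r2 * (r1' + r2')) := by
    unfold thetaTau bslope
    push_cast
    field_simp
  rw [hcleared, div_lt_iff₀ (by positivity), zero_mul, sub_neg]

theorem tau_lt_of_mul_sub_lt {r1 r2 k d1 d2 τ : ℝ} (h1 : 0 < r1) (h2 : 0 < r2) (hne : r1 ≠ r2)
    (hk0 : 0 ≤ k) (hk_le : k ≤ r2) (hk_ge : r2 - r1 ≤ k) (hx : d1 - r1 * τ < 0)
    (hkey : r2 * ((d2 - r2 * τ) - (d1 - r1 * τ)) < k * (d1 + d2 - (r1 + r2) * τ)) :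
    τ < d1 / r1 + r2 / |r1 - r2| * (d1 / r1 - d2 / r2) := by
  have hy : d2 - r2 * τ < 0 := by
    by_contra! hy
    linarith [mul_nonneg (sub_nonneg.2 hk_le) hy, mul_nonpos_of_nonneg_of_nonpos hk0 hx.le,
      mul_neg_of_pos_of_neg h2 hx]
  have hS : d1 + d2 - (r1 + r2) * τ < 0 := by linarith
  rcases hne.lt_or_gt with hlt | hgt
  · have hbound : d1 / r1 + r2 / |r1 - r2| * (d1 / r1 - d2 / r2) =
        (2 * r2 * d1 - r1 * d1 - r1 * d2) / (r1 * (r2 - r1)) := by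
      rw [abs_of_neg (sub_neg.2 hlt), neg_sub]
      field_simp [(sub_pos.2 hlt).ne']
      ring
    rw [hbound, lt_div_iff₀ (mul_pos h1 (sub_pos.2 hlt))]
    linarith [mul_le_mul_of_nonpos_right hk_ge hS.le]
  · have hbound : d1 / r1 + r2 / |r1 - r2| * (d1 / r1 - d2 / r2) = (d1 - d2) / (r1 - r2) := by
      rw [abs_of_pos (sub_pos.2 hgt)]
      field_simp [(sub_pos.2 hgt).ne']
      ring
    have hyx : d2 - r2 * τ - (d1 - r1 * τ) < 0 :=
      neg_of_mul_neg_right (hkey.trans_le (mul_nonpos_of_nonneg_of_nonpos hk0 hS.le)) h2.le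
    rw [hbound, lt_div_iff₀ (sub_pos.2 hgt)]
    linarith

theorem sigma_lt_of_tau_lt {r1 r2 d1 d2 τ : ℝ} (h1 : 0 < r1) (h2 : 0 < r2) (hne : r1 ≠ r2)
    (hτ : τ < d1 / r1 + r2 / |r1 - r2| * (d1 / r1 - d2 / r2)) :
    ((r1 + r2) * τ - (d1 + d2)) / r2 < (1 + (r1 + r2) / |r1 - r2|) * (d1 / r1 - d2 / r2) := by
  have hc : 0 < |r1 - r2| := abs_pos.2 (sub_ne_zero.2 hne)
  have hexpand : (1 + (r1 + r2) / |r1 - r2|) * (d1 / r1 - d2 / r2) * r2 =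
      (r1 + r2) * (d1 / r1 + r2 / |r1 - r2| * (d1 / r1 - d2 / r2)) - (d1 + d2) := by
    field_simp
    ring
  rw [div_lt_iff₀ h2, hexpand]
  linarith [mul_lt_mul_of_pos_left hτ (add_pos h1 h2)]

def cokernelKernelSubobjectIsoImageSubobject {X Y : C} (f : X ⟶ Y) :
    cokernel (kernelSubobject f).arrow ≅ (imageSubobject f : C) :=
  cokernelIsoOfEq (kernelSubobject_arrow f).symm ≪≫ cokernelEpiComp _ _ ≪≫
    Abelian.coimageIsoImage' f ≪≫ (imageSubobjectIso f).symm

section RankDegree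

variable (rank : C → ℕ) (deg : C → ℤ)

theorem rank_le_of_subobject
    (hrank_add : ∀ (B : C) (X : Subobject B), rank B = rank (X : C) + rank (cokernel X.arrow))
    {B : C} (X : Subobject B) : rank (X : C) ≤ rank B :=
  (hrank_add B X).symm ▸ Nat.le_add_right _ _

theorem bot_ne_top_of_rank_pos
    (hrank_bot : ∀ (B : C) (X : Subobject B), X = ⊥ ↔ rank (X : C) = 0)
    (hrank_top : ∀ B : C, rank ((⊤ : Subobject B) : C) = rank B)
    {B : C} (hB : 0 < rank B) : (⊥ : Subobject B) ≠ ⊤ := by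
  intro h
  have h0 := (hrank_bot B ⊥).mp rfl
  rw [h, hrank_top B] at h0
  omega

theorem deg_bot
    (hdeg_add : ∀ (B : C) (X : Subobject B), deg B = deg (X : C) + deg (cokernel X.arrow))
    (hiso : ∀ A B : C, Nonempty (A ≅ B) → rank A = rank B ∧ deg A = deg B)
    (B : C) : deg ((⊥ : Subobject B) : C) = 0 := by
  have hcoker := (hiso _ B ⟨cokernelIsoOfEq Subobject.bot_arrow ≪≫ cokernelZeroIsoTarget⟩).2
  have := hdeg_add B ⊥
  omega

theorem rank_eq_rank_kernelSubobject_add_rank_imageSubobject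
    (hrank_add : ∀ (B : C) (X : Subobject B), rank B = rank (X : C) + rank (cokernel X.arrow))
    (hiso : ∀ A B : C, Nonempty (A ≅ B) → rank A = rank B ∧ deg A = deg B)
    {X Y : C} (f : X ⟶ Y) :
    rank X = rank (kernelSubobject f : C) + rank (imageSubobject f : C) := by
  rw [hrank_add X (kernelSubobject f),
    (hiso _ _ ⟨cokernelKernelSubobjectIsoImageSubobject f⟩).1]

theorem deg_eq_deg_kernelSubobject_add_deg_imageSubobject
    (hdeg_add : ∀ (B : C) (X : Subobject B), deg B = deg (X : C) + deg (cokernel X.arrow))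
    (hiso : ∀ A B : C, Nonempty (A ≅ B) → rank A = rank B ∧ deg A = deg B)
    {X Y : C} (f : X ⟶ Y) :
    deg X = deg (kernelSubobject f : C) + deg (imageSubobject f : C) := by
  rw [hdeg_add X (kernelSubobject f),
    (hiso _ _ ⟨cokernelKernelSubobjectIsoImageSubobject f⟩).2]

end RankDegree

theorem isSubtriple_bot_kernelSubobject {E1 E2 : C} (Φ : E2 ⟶ E1) :
    IsSubtriple Φ ⊥ (kernelSubobject Φ) := by
  rw [IsSubtriple, kernelSubobject_arrow_comp]
  exact Subobject.factors_zero

theorem isSubtriple_imageSubobject_top {E1 E2 : C} (Φ : E2 ⟶ E1) :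
    IsSubtriple Φ (imageSubobject Φ) ⊤ :=
  (Subobject.factors_iff _ _).mpr
    ⟨(⊤ : Subobject E2).arrow ≫ factorThruImageSubobject Φ, by simp⟩

theorem isSubtriple_top_bot {E1 E2 : C} (Φ : E2 ⟶ E1) :
    IsSubtriple Φ ⊤ (⊥ : Subobject E2) :=
  Subobject.top_factors _

namespace TStable

variable {rank : C → ℕ} {deg : C → ℤ} {E1 E2 : C} {Φ : E2 ⟶ E1} {τ : ℝ}

theorem lt_of_isSubtriple (hst : TStable rank deg E1 E2 Φ τ)
    (hrank_bot : ∀ (B : C) (X : Subobject B), X = ⊥ ↔ rank (X : C) = 0) (h2 : 0 < rank E2)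
    {E1' : Subobject E1} {E2' : Subobject E2} (hsub : IsSubtriple Φ E1' E2')
    (hbot : ¬(E1' = ⊥ ∧ E2' = ⊥)) (htop : ¬(E1' = ⊤ ∧ E2' = ⊤)) :
    (rank E2 : ℝ) * (deg (E1' : C) + deg (E2' : C) - (rank (E1' : C) + rank (E2' : C)) * τ) <
      rank (E2' : C) * (deg E1 + deg E2 - (rank E1 + rank E2) * τ) := by
  have hpos : 0 < rank (E1' : C) + rank (E2' : C) := by
    by_contra! h
    exact hbot ⟨(hrank_bot _ _).2 (by omega), (hrank_bot _ _).2 (by omega)⟩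
  exact (thetaTau_neg_iff h2 hpos).1 (hst _ _ hsub hbot htop)

theorem le_of_isSubtriple (hst : TStable rank deg E1 E2 Φ τ)
    (hrank_bot : ∀ (B : C) (X : Subobject B), X = ⊥ ↔ rank (X : C) = 0)
    (hrank_top : ∀ B : C, rank ((⊤ : Subobject B) : C) = rank B)
    (hdeg_top : ∀ B : C, deg ((⊤ : Subobject B) : C) = deg B)
    (hdeg_add : ∀ (B : C) (X : Subobject B), deg B = deg (X : C) + deg (cokernel X.arrow))
    (hiso : ∀ A B : C, Nonempty (A ≅ B) → rank A = rank B ∧ deg A = deg B)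
    (h2 : 0 < rank E2)
    {E1' : Subobject E1} {E2' : Subobject E2} (hsub : IsSubtriple Φ E1' E2') :
    (rank E2 : ℝ) * (deg (E1' : C) + deg (E2' : C) - (rank (E1' : C) + rank (E2' : C)) * τ) ≤
      rank (E2' : C) * (deg E1 + deg E2 - (rank E1 + rank E2) * τ) := by
  by_cases hbot : E1' = ⊥ ∧ E2' = ⊥
  · obtain ⟨rfl, rfl⟩ := hbot
    simp [(hrank_bot _ ⊥).mp rfl, deg_bot rank deg hdeg_add hiso]
  by_cases htop : E1' = ⊤ ∧ E2' = ⊤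
  · obtain ⟨rfl, rfl⟩ := htop
    simp only [hrank_top, hdeg_top, le_refl]
  exact (hst.lt_of_isSubtriple hrank_bot h2 hsub hbot htop).le

theorem rank_mul_sub_lt_rank_kernelSubobject_mul (hst : TStable rank deg E1 E2 Φ τ)
    (hrank_bot : ∀ (B : C) (X : Subobject B), X = ⊥ ↔ rank (X : C) = 0)
    (hrank_top : ∀ B : C, rank ((⊤ : Subobject B) : C) = rank B)
    (hdeg_top : ∀ B : C, deg ((⊤ : Subobject B) : C) = deg B)
    (hrank_add : ∀ (B : C) (X : Subobject B), rank B = rank (X : C) + rank (cokernel X.arrow))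
    (hdeg_add : ∀ (B : C) (X : Subobject B), deg B = deg (X : C) + deg (cokernel X.arrow))
    (hiso : ∀ A B : C, Nonempty (A ≅ B) → rank A = rank B ∧ deg A = deg B)
    (h1 : 0 < rank E1) (h2 : 0 < rank E2) (hne : rank E1 ≠ rank E2) :
    (rank E2 : ℝ) * ((deg E2 - rank E2 * τ) - (deg E1 - rank E1 * τ)) <
      rank (kernelSubobject Φ : C) * (deg E1 + deg E2 - (rank E1 + rank E2) * τ) := by
  have hrank_split :=
    rank_eq_rank_kernelSubobject_add_rank_imageSubobject rank deg hrank_add hiso Φ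
  have hdeg_split := deg_eq_deg_kernelSubobject_add_deg_imageSubobject rank deg hdeg_add hiso Φ
  have hrank : (rank (imageSubobject Φ : C) : ℝ) = rank E2 - rank (kernelSubobject Φ : C) := by
    rw [eq_sub_iff_add_eq']
    exact_mod_cast hrank_split.symm
  have hdeg : (deg (imageSubobject Φ : C) : ℝ) = deg E2 - deg (kernelSubobject Φ : C) := by
    rw [eq_sub_iff_add_eq']
    exact_mod_cast hdeg_split.symm
  have hrank_bot' : ((rank ((⊥ : Subobject E1) : C) : ℕ) : ℝ) = 0 := by
    exact_mod_cast (hrank_bot _ ⊥).mp rfl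
  have hdeg_bot' : ((deg ((⊥ : Subobject E1) : C) : ℤ) : ℝ) = 0 := by
    exact_mod_cast deg_bot rank deg hdeg_add hiso E1
  have hker := hst.le_of_isSubtriple hrank_bot hrank_top hdeg_top hdeg_add hiso h2
    (isSubtriple_bot_kernelSubobject Φ)
  have him := hst.le_of_isSubtriple hrank_bot hrank_top hdeg_top hdeg_add hiso h2
    (isSubtriple_imageSubobject_top Φ)
  rw [hrank_bot', hdeg_bot'] at hker
  rw [hrank_top, hdeg_top, hrank, hdeg] at him
  have hproper : kernelSubobject Φ ≠ ⊥ ∨ imageSubobject Φ ≠ ⊤ := by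
    by_contra! h
    rw [h.1, h.2, (hrank_bot _ ⊥).mp rfl, hrank_top] at hrank_split
    omega
  rcases hproper with hker_ne | him_ne
  · have hker_lt := hst.lt_of_isSubtriple hrank_bot h2 (isSubtriple_bot_kernelSubobject Φ)
      (fun h => hker_ne h.2) (fun h => bot_ne_top_of_rank_pos rank hrank_bot hrank_top h1 h.1)
    rw [hrank_bot', hdeg_bot'] at hker_lt
    linarith
  · have him_lt := hst.lt_of_isSubtriple hrank_bot h2 (isSubtriple_imageSubobject_top Φ)
      (fun h => bot_ne_top_of_rank_pos rank hrank_bot hrank_top h2 h.2.symm)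
      (fun h => him_ne h.1)
    rw [hrank_top, hdeg_top, hrank, hdeg] at him_lt
    linarith

theorem deg_sub_rank_mul_neg (hst : TStable rank deg E1 E2 Φ τ)
    (hrank_bot : ∀ (B : C) (X : Subobject B), X = ⊥ ↔ rank (X : C) = 0)
    (hrank_top : ∀ B : C, rank ((⊤ : Subobject B) : C) = rank B)
    (hdeg_top : ∀ B : C, deg ((⊤ : Subobject B) : C) = deg B)
    (hdeg_add : ∀ (B : C) (X : Subobject B), deg B = deg (X : C) + deg (cokernel X.arrow))
    (hiso : ∀ A B : C, Nonempty (A ≅ B) → rank A = rank B ∧ deg A = deg B)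
    (h1 : 0 < rank E1) (h2 : 0 < rank E2) : (deg E1 : ℝ) - rank E1 * τ < 0 := by
  have h := hst.lt_of_isSubtriple hrank_bot h2 (isSubtriple_top_bot Φ)
    (fun h => bot_ne_top_of_rank_pos rank hrank_bot hrank_top h1 h.1.symm)
    (fun h => bot_ne_top_of_rank_pos rank hrank_bot hrank_top h2 h.2)
  rw [hrank_top, hdeg_top, (hrank_bot _ ⊥).mp rfl, deg_bot rank deg hdeg_add hiso] at h
  push_cast at h
  rw [zero_mul, add_zero, add_zero] at h
  exact neg_of_mul_neg_right h (Nat.cast_nonneg _)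

end TStable

/-- upper bound on `τ` for a `τ`-stable triple with `r₁ ≠ r₂`. -/
theorem tau_upper_bound_of_tStable
    (rank : C → ℕ) (deg : C → ℤ) (E1 E2 : C) (Φ : E2 ⟶ E1) (τ : ℝ)
    (hrank_bot : ∀ (B : C) (X : Subobject B), X = ⊥ ↔ rank (X : C) = 0)
    (hrank_top : ∀ B : C, rank ((⊤ : Subobject B) : C) = rank B)
    (hdeg_top : ∀ B : C, deg ((⊤ : Subobject B) : C) = deg B)
    (hrank_add : ∀ (B : C) (X : Subobject B), rank B = rank (X : C) + rank (cokernel X.arrow))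
    (hdeg_add : ∀ (B : C) (X : Subobject B), deg B = deg (X : C) + deg (cokernel X.arrow))
    (hiso : ∀ A B : C, Nonempty (A ≅ B) → rank A = rank B ∧ deg A = deg B)
    (h1 : 0 < rank E1) (h2 : 0 < rank E2) (hne : rank E1 ≠ rank E2)
    (hst : TStable rank deg E1 E2 Φ τ) :
    τ < bslope (deg E1) (rank E1) +
        ((rank E2 : ℝ) / |(rank E1 : ℝ) - (rank E2 : ℝ)|) *
          (bslope (deg E1) (rank E1) - bslope (deg E2) (rank E2)) ∧
      (∀ σ : ℝ,
        σ = (((rank E1 : ℝ) + (rank E2 : ℝ)) * τ - ((deg E1 : ℝ) + (deg E2 : ℝ))) /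
              (rank E2 : ℝ) →
        σ < (1 + ((rank E1 : ℝ) + (rank E2 : ℝ)) / |(rank E1 : ℝ) - (rank E2 : ℝ)|) *
              (bslope (deg E1) (rank E1) - bslope (deg E2) (rank E2))) := by
  have h1' : (0 : ℝ) < rank E1 := by exact_mod_cast h1
  have h2' : (0 : ℝ) < rank E2 := by exact_mod_cast h2
  have hne' : (rank E1 : ℝ) ≠ rank E2 := by exact_mod_cast hne
  have hker_le : (rank (kernelSubobject Φ : C) : ℝ) ≤ rank E2 := by
    exact_mod_cast rank_le_of_subobject rank hrank_add (kernelSubobject Φ)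
  have hker_ge : (rank E2 : ℝ) - rank E1 ≤ rank (kernelSubobject Φ : C) := by
    have hsplit := rank_eq_rank_kernelSubobject_add_rank_imageSubobject rank deg hrank_add hiso Φ
    have him_le := rank_le_of_subobject rank hrank_add (imageSubobject Φ)
    rw [sub_le_iff_le_add]
    exact_mod_cast (by omega : rank E2 ≤ rank (kernelSubobject Φ : C) + rank E1)
  have hτ := tau_lt_of_mul_sub_lt h1' h2' hne' (Nat.cast_nonneg _) hker_le hker_ge
    (hst.deg_sub_rank_mul_neg hrank_bot hrank_top hdeg_top hdeg_add hiso h1 h2)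
    (hst.rank_mul_sub_lt_rank_kernelSubobject_mul hrank_bot hrank_top hdeg_top hrank_add hdeg_add
      hiso h1 h2 hne)
  unfold bslope
  exact ⟨hτ, fun σ hσ => hσ ▸ sigma_lt_of_tau_lt h1' h2' hne' hτ⟩
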